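/- arXiv:1907.09918 — 6 statements merged into one kernel-verified Lean document; each statement's English description precedes it below -/
import Mathlib

section
/- Let Q ≥ 1 be an integer and t > 0. Then ∫₀^∞ (1 − exp(−t/x))·x^{Q-1}·e^{−x}/Γ(Q) dx = 1 − (2/Γ(Q))·t^{Q/2}·K_Q(2√t). -/
open MeasureTheory Real Set


/-- The modified Bessel function of the second kind, via its integral representation
`K_ν(x) = ∫₀^∞ exp(−x cosh t) cosh(ν t) dt`. -/
noncomputable def besselK (ν x : ℝ) : ℝ :=
  ∫ t in Set.Ioi (0 : ℝ), Real.exp (-x * Real.cosh t) * Real.cosh (ν * t)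

lemma substEq (Q : ℕ) (t : ℝ) (ht : 0 < t) (s : ℝ) :
    |Real.sqrt t * Real.exp s| • (Real.exp (-t / (Real.sqrt t * Real.exp s)) *
      (Real.sqrt t * Real.exp s) ^ ((Q:ℝ)-1) * Real.exp (-(Real.sqrt t * Real.exp s)))
    = t ^ ((Q:ℝ)/2) * (Real.exp (-(2*Real.sqrt t) * Real.cosh s) * Real.exp ((Q:ℝ)*s)) := by
  have hr : 0 < Real.sqrt t := Real.sqrt_pos.2 ht
  have hx : 0 < Real.sqrt t * Real.exp s := mul_pos hr (Real.exp_pos s)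
  have hdiv : -t / (Real.sqrt t * Real.exp s) = -(Real.sqrt t * Real.exp (-s)) := by
    rw [neg_div, neg_inj, div_eq_iff hx.ne', mul_mul_mul_comm, ← Real.exp_add, neg_add_cancel,
      Real.exp_zero, mul_one, Real.mul_self_sqrt ht.le]
  rw [smul_eq_mul, abs_of_pos hx, hdiv,
    Real.rpow_def_of_pos hx, Real.log_mul hr.ne' (Real.exp_pos s).ne', Real.log_exp,
    Real.rpow_def_of_pos ht, Real.cosh_eq]
  have h1 : Real.sqrt t * Real.exp s = Real.exp (Real.log (Real.sqrt t) + s) := by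
    rw [Real.exp_add, Real.exp_log hr]
  have h2 : Real.log t = 2 * Real.log (Real.sqrt t) := by
    rw [Real.log_sqrt ht.le]; ring
  rw [h1, h2, ← Real.exp_add, ← Real.exp_add, ← Real.exp_add, ← Real.exp_add, ← Real.exp_add]
  congr 1
  rw [← h1]
  ring

lemma keyInt (Q : ℕ) (t : ℝ) (ht : 0 < t)
    (hf2 : IntegrableOn (fun x => Real.exp (-t/x) * x ^ ((Q:ℝ)-1) * Real.exp (-x)) (Ioi 0)) :
    ∫ x in Ioi (0:ℝ), Real.exp (-t/x) * x ^ ((Q:ℝ)-1) * Real.exp (-x)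
      = 2 * t ^ ((Q:ℝ)/2) * besselK Q (2 * Real.sqrt t) := by
  have hr : 0 < Real.sqrt t := Real.sqrt_pos.2 ht
  set f : ℝ → ℝ := fun s => Real.sqrt t * Real.exp s with hf
  have himg : f '' univ = Ioi 0 := by
    ext x
    simp only [image_univ, mem_range, mem_Ioi]
    constructor
    · rintro ⟨s, rfl⟩; exact mul_pos hr (Real.exp_pos s)
    · intro hx
      exact ⟨Real.log (x / Real.sqrt t), by
        rw [hf]; simp only []
        rw [Real.exp_log (div_pos hx hr), mul_div_cancel₀ _ hr.ne']⟩
  have hderiv : ∀ s ∈ (univ : Set ℝ), HasDerivWithinAt f (Real.sqrt t * Real.exp s) univ s :=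
    fun s _ => ((Real.hasDerivAt_exp s).const_mul (Real.sqrt t)).hasDerivWithinAt
  have hinj : InjOn f univ := fun a _ b _ h => by
    have := mul_left_cancel₀ hr.ne' h
    exact Real.exp_injective this
  have hsub := integral_image_eq_integral_abs_deriv_smul (f' := fun s => Real.sqrt t * Real.exp s)
    MeasurableSet.univ hderiv hinj
    (fun x => Real.exp (-t/x) * x ^ ((Q:ℝ)-1) * Real.exp (-x))
  rw [himg] at hsub
  rw [hsub]
  have heq : (fun s => |Real.sqrt t * Real.exp s| •
      (Real.exp (-t / f s) * (f s) ^ ((Q:ℝ)-1) * Real.exp (-(f s))))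
      = fun s => t ^ ((Q:ℝ)/2) *
        (Real.exp (-(2*Real.sqrt t) * Real.cosh s) * Real.exp ((Q:ℝ)*s)) := by
    funext s; exact substEq Q t ht s
  rw [Measure.restrict_univ]
  rw [show (fun s => |Real.sqrt t * Real.exp s| •
      (Real.exp (-t / f s) * (f s) ^ ((Q:ℝ)-1) * Real.exp (-(f s)))) = _ from heq]
  rw [integral_const_mul]
  -- integrability of h
  have hInt : Integrable (fun s => Real.exp (-(2*Real.sqrt t) * Real.cosh s) *
      Real.exp ((Q:ℝ)*s)) := by
    have := (integrableOn_image_iff_integrableOn_abs_deriv_smul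
      (f' := fun s => Real.sqrt t * Real.exp s) MeasurableSet.univ hderiv hinj
      (fun x => Real.exp (-t/x) * x ^ ((Q:ℝ)-1) * Real.exp (-x))).mp (by rwa [himg])
    rw [show (fun s => |Real.sqrt t * Real.exp s| •
      (Real.exp (-t / f s) * (f s) ^ ((Q:ℝ)-1) * Real.exp (-(f s)))) = _ from heq] at this
    rw [← integrableOn_univ]
    exact (integrable_const_mul_iff
      (isUnit_iff_ne_zero.2 (Real.rpow_pos_of_pos ht _).ne') _).mp this
  have hIic : (∫ s in Iic (0:ℝ), Real.exp (-(2*Real.sqrt t) * Real.cosh s) *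
      Real.exp ((Q:ℝ)*s))
      = ∫ s in Ioi (0:ℝ), Real.exp (-(2*Real.sqrt t) * Real.cosh s) * Real.exp (-((Q:ℝ)*s)) := by
    have := integral_comp_neg_Iic (0:ℝ) (fun s => Real.exp (-(2*Real.sqrt t) * Real.cosh (-s)) *
      Real.exp (-((Q:ℝ)*s)))
    simp only [neg_neg, neg_zero, Real.cosh_neg] at this
    rw [← this]
    congr 1
    funext s
    congr 1; ring
  rw [← intervalIntegral.integral_Iic_add_Ioi (b := (0:ℝ)) hInt.integrableOn hInt.integrableOn, hIic]
  have hIntNeg : IntegrableOn (fun s => Real.exp (-(2*Real.sqrt t) * Real.cosh s) *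
      Real.exp (-((Q:ℝ)*s))) (Ioi 0) := by
    have h2 := hInt.comp_neg
    simp only [Real.cosh_neg, mul_neg, neg_neg] at h2
    exact h2.integrableOn
  rw [← integral_add hIntNeg hInt.integrableOn, besselK]
  rw [show (2:ℝ) * t^((Q:ℝ)/2) *
      (∫ s in Ioi (0:ℝ), Real.exp (-(2*Real.sqrt t) * Real.cosh s) * Real.cosh ((Q:ℝ)*s))
      = t^((Q:ℝ)/2) * ∫ s in Ioi (0:ℝ),
        2 * (Real.exp (-(2*Real.sqrt t) * Real.cosh s) * Real.cosh ((Q:ℝ)*s)) from by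
    rw [integral_const_mul]; ring]
  congr 1
  refine setIntegral_congr_fun measurableSet_Ioi fun s _ => ?_
  rw [Real.cosh_eq ((Q:ℝ)*s)]
  ring

theorem stmt_3 (Q : ℕ) (hQ : 1 ≤ Q) (t : ℝ) (ht : 0 < t) :
    ∫ x in Set.Ioi (0 : ℝ),
        (1 - Real.exp (-t / x)) * x ^ ((Q : ℝ) - 1) * Real.exp (-x) / Real.Gamma Q =
      1 - (2 / Real.Gamma Q) * t ^ ((Q : ℝ) / 2) * besselK Q (2 * Real.sqrt t) := by
  have hQ0 : (0:ℝ) < (Q:ℝ) := by exact_mod_cast hQ.trans_lt' (by norm_num)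
  have hΓ : 0 < Real.Gamma Q := Real.Gamma_pos_of_pos hQ0
  have hf1 : IntegrableOn (fun x => Real.exp (-x) * x ^ ((Q:ℝ)-1)) (Ioi 0) :=
    Real.GammaIntegral_convergent hQ0
  have hf2 : IntegrableOn (fun x => Real.exp (-t/x) * x ^ ((Q:ℝ)-1) * Real.exp (-x)) (Ioi 0) := by
    refine hf1.mono' ?_ ?_
    · apply Measurable.aestronglyMeasurable
      fun_prop
    · rw [ae_restrict_iff' measurableSet_Ioi]
      filter_upwards with x hx
      have h1 : Real.exp (-t/x) ≤ 1 :=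
        Real.exp_le_one_iff.mpr (by rw [neg_div]; exact neg_nonpos.2 (div_nonneg ht.le (le_of_lt hx)))
      have h2 : (0:ℝ) ≤ x ^ ((Q:ℝ)-1) * Real.exp (-x) :=
        mul_nonneg (Real.rpow_nonneg hx.le _) (Real.exp_pos _).le
      calc ‖Real.exp (-t/x) * x ^ ((Q:ℝ)-1) * Real.exp (-x)‖
          = Real.exp (-t/x) * (x ^ ((Q:ℝ)-1) * Real.exp (-x)) := by
            rw [Real.norm_eq_abs, abs_of_nonneg (mul_nonneg (mul_nonneg (Real.exp_pos _).le (Real.rpow_nonneg (le_of_lt hx) _)) (Real.exp_pos _).le), mul_assoc]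
        _ ≤ 1 * (x ^ ((Q:ℝ)-1) * Real.exp (-x)) := by
            exact mul_le_mul_of_nonneg_right h1 h2
        _ = Real.exp (-x) * x ^ ((Q:ℝ)-1) := by ring
  have hsplit : (fun x => (1 - Real.exp (-t/x)) * x ^ ((Q:ℝ)-1) * Real.exp (-x) / Real.Gamma Q)
      = fun x => (Real.exp (-x) * x ^ ((Q:ℝ)-1)) / Real.Gamma Q
        - (Real.exp (-t/x) * x ^ ((Q:ℝ)-1) * Real.exp (-x)) / Real.Gamma Q := by
    funext x; ring
  rw [hsplit, integral_sub (hf1.div_const _) (hf2.div_const _), integral_div, integral_div,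
    ← Real.Gamma_eq_integral hQ0, keyInt Q t ht hf2, div_self hΓ.ne']
  ring
end

section
/- Let Q ≥ 1 be an integer, let X be a Gamma(Q,1)-distributed real random variable and Y an Exp(1)-distributed real random variable, with X and Y independent. Then for every t > 0, the probability that X·Y ≤ t equals 1 − (2/Γ(Q))·t^{Q/2}·K_Q(2√t). -/
open MeasureTheory ProbabilityTheory

/-!
Conditioning on `X`, `ℙ(XY > t) = 𝔼[exp(-t/X)] = Γ(Q)⁻¹ ∫₀^∞ x^(Q-1) exp(-x - t/x) dx`.
The substitution `x = √t·eᵘ` turns this integral into `t^(Q/2) ∫_ℝ exp(Qu - 2√t cosh u) du`,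
and folding the real line onto `(0, ∞)` identifies the last integral with `2 K_Q(2√t)`.
-/

open Real Set

lemma sq_div_four_le_cosh (u : ℝ) : u ^ 2 / 4 ≤ cosh u := by
  have h := quadratic_le_exp_of_nonneg (abs_nonneg u)
  rw [← cosh_abs, cosh_eq]
  nlinarith [exp_pos (-|u|), abs_nonneg u, sq_abs u]

lemma integrable_exp_mul_sub_mul_cosh (ν : ℝ) {c : ℝ} (hc : 0 < c) :
    Integrable fun u : ℝ => exp (ν * u - c * cosh u) := by
  have hgauss : Integrable fun u : ℝ => exp (ν ^ 2 / c) * exp (-(c / 4) * (u - 2 * ν / c) ^ 2) :=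
    ((integrable_exp_neg_mul_sq (by positivity)).comp_sub_right _).const_mul _
  refine hgauss.mono' (by fun_prop) (ae_of_all _ fun u => ?_)
  rw [norm_of_nonneg (exp_pos _).le, ← exp_add, exp_le_exp]
  -- completing the square in the Gaussian bound `c * cosh u ≥ c * u ^ 2 / 4`
  have hsq : ν * u - c * (u ^ 2 / 4) = ν ^ 2 / c + -(c / 4) * (u - 2 * ν / c) ^ 2 := by
    field_simp; ring
  nlinarith [mul_le_mul_of_nonneg_left (sq_div_four_le_cosh u) hc.le]

lemma besselK_nonneg (ν x : ℝ) : 0 ≤ besselK ν x :=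
  setIntegral_nonneg measurableSet_Ioi fun _ _ => mul_nonneg (exp_pos _).le (cosh_pos _).le

lemma integral_exp_mul_sub_mul_cosh (ν : ℝ) {c : ℝ} (hc : 0 < c) :
    ∫ u, exp (ν * u - c * cosh u) = 2 * besselK ν c := by
  have hI := integrable_exp_mul_sub_mul_cosh ν hc
  have hI' := integrable_exp_mul_sub_mul_cosh (-ν) hc
  have hIic : ∫ u in Iic 0, exp (ν * u - c * cosh u) = ∫ u in Ioi 0, exp (-ν * u - c * cosh u) := by
    simpa using (integral_comp_neg_Ioi 0 fun u => exp (ν * u - c * cosh u)).symm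
  rw [← intervalIntegral.integral_Iic_add_Ioi hI.integrableOn hI.integrableOn, hIic,
    ← integral_add hI'.integrableOn hI.integrableOn, besselK, ← integral_const_mul]
  congr 1 with u
  rw [cosh_eq (ν * u)]
  simp only [neg_mul, sub_eq_add_neg, exp_add]
  ring

lemma hasDerivWithinAt_mul_exp (s u : ℝ) :
    HasDerivWithinAt (fun u => s * exp u) (s * exp u) univ u :=
  ((hasDerivAt_exp u).const_mul s).hasDerivWithinAt

section ExpSubstitution

variable {E : Type*} [NormedAddCommGroup E] [NormedSpace ℝ E] {s : ℝ}

lemma image_univ_mul_exp (hs : 0 < s) : (fun u => s * exp u) '' univ = Ioi 0 := by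
  rw [show (fun u => s * exp u) = (s * ·) ∘ exp from rfl, image_comp, image_univ, range_exp,
    image_mul_left_Ioi hs, mul_zero]

lemma injOn_mul_exp (hs : 0 < s) : InjOn (fun u => s * exp u) univ :=
  fun _ _ _ _ h => exp_injective (mul_left_cancel₀ hs.ne' h)

theorem integrableOn_Ioi_iff_integrable_comp_mul_exp (g : ℝ → E) (hs : 0 < s) :
    IntegrableOn g (Ioi 0) ↔ Integrable fun u => (s * exp u) • g (s * exp u) := by
  rw [← image_univ_mul_exp hs, integrableOn_image_iff_integrableOn_abs_deriv_smul
      MeasurableSet.univ (fun u _ => hasDerivWithinAt_mul_exp s u) (injOn_mul_exp hs),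
    integrableOn_univ]
  simp only [abs_of_pos (mul_pos hs (exp_pos _))]

theorem integral_Ioi_eq_integral_comp_mul_exp (g : ℝ → E) (hs : 0 < s) :
    ∫ x in Ioi 0, g x = ∫ u, (s * exp u) • g (s * exp u) := by
  rw [← image_univ_mul_exp hs, integral_image_eq_integral_abs_deriv_smul
      MeasurableSet.univ (fun u _ => hasDerivWithinAt_mul_exp s u) (injOn_mul_exp hs),
    Measure.restrict_univ]
  simp only [abs_of_pos (mul_pos hs (exp_pos _))]

end ExpSubstitution

lemma mul_rpow_mul_exp_neg_sub_div (ν : ℝ) {t : ℝ} (ht : 0 < t) (u : ℝ) :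
    (√t * exp u) * ((√t * exp u) ^ (ν - 1) * exp (-(√t * exp u) - t / (√t * exp u))) =
      t ^ (ν / 2) * exp (ν * u - 2 * √t * cosh u) := by
  have hx : 0 < √t * exp u := by positivity
  have hpow : (√t * exp u) * (√t * exp u) ^ (ν - 1) = t ^ (ν / 2) * exp (ν * u) := by
    rw [rpow_sub_one hx.ne', mul_div_cancel₀ _ hx.ne', mul_rpow (sqrt_nonneg t) (exp_pos u).le,
      sqrt_eq_rpow, ← rpow_mul ht.le, ← exp_mul, mul_comm u ν]
    ring_nf
  have hdiv : t / (√t * exp u) = √t * exp (-u) := by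
    rw [exp_neg]
    field_simp
    rw [sq_sqrt ht.le]
  rw [← mul_assoc, hpow, hdiv, cosh_eq, mul_assoc, ← exp_add]
  ring_nf

lemma integrableOn_rpow_mul_exp_neg_sub_div (ν : ℝ) {t : ℝ} (ht : 0 < t) :
    IntegrableOn (fun x => x ^ (ν - 1) * exp (-x - t / x)) (Ioi 0) := by
  rw [integrableOn_Ioi_iff_integrable_comp_mul_exp _ (sqrt_pos.2 ht)]
  simp only [smul_eq_mul, mul_rpow_mul_exp_neg_sub_div ν ht]
  exact (integrable_exp_mul_sub_mul_cosh ν (by positivity)).const_mul _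

lemma integral_rpow_mul_exp_neg_sub_div (ν : ℝ) {t : ℝ} (ht : 0 < t) :
    ∫ x in Ioi 0, x ^ (ν - 1) * exp (-x - t / x) = 2 * t ^ (ν / 2) * besselK ν (2 * √t) := by
  rw [integral_Ioi_eq_integral_comp_mul_exp _ (sqrt_pos.2 ht)]
  simp only [smul_eq_mul, mul_rpow_mul_exp_neg_sub_div ν ht]
  rw [integral_const_mul, integral_exp_mul_sub_mul_cosh ν (by positivity)]
  ring

lemma expMeasure_Ioi {r a : ℝ} (hr : 0 < r) (ha : 0 ≤ a) :
    expMeasure r (Ioi a) = ENNReal.ofReal (exp (-(r * a))) := by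
  have := isProbabilityMeasure_expMeasure hr
  have hexp : exp (-(r * a)) ≤ 1 := exp_le_one_iff.2 (by nlinarith)
  rw [← compl_Iic, prob_compl_eq_one_sub measurableSet_Iic, ← ofReal_cdf, cdf_expMeasure_eq hr,
    if_pos ha, ← ENNReal.ofReal_one, ← ENNReal.ofReal_sub _ (by linarith), sub_sub_cancel]

lemma gammaPDF_mul_expMeasure_lt_mul {a t : ℝ} (ha : 0 < a) (ht : 0 < t) (x : ℝ) :
    gammaPDF a 1 x * expMeasure 1 {y | t < x * y} =
      (Ioi 0).indicator
        (fun x => ENNReal.ofReal ((Gamma a)⁻¹ * (x ^ (a - 1) * exp (-x - t / x)))) x := by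
  rcases lt_trichotomy x 0 with hx | rfl | hx
  · simp [gammaPDF_of_neg hx, hx.not_gt]
  · simp [ht.not_gt]
  · have hset : {y | t < x * y} = Ioi (t / x) := by
      ext y
      exact (div_lt_iff₀' hx).symm
    have := Gamma_pos_of_pos ha
    rw [hset, expMeasure_Ioi one_pos (by positivity), indicator_of_mem (mem_Ioi.2 hx),
      gammaPDF_of_nonneg hx.le, ← ENNReal.ofReal_mul (by positivity)]
    congr 1
    rw [one_rpow, one_mul, div_eq_inv_mul, mul_one, one_mul, sub_eq_add_neg (-x), exp_add]
    ring

lemma lintegral_expMeasure_lt_mul_gammaMeasure {a t : ℝ} (ha : 0 < a) (ht : 0 < t) :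
    ∫⁻ x, expMeasure 1 {y | t < x * y} ∂gammaMeasure a 1 =
      ENNReal.ofReal (2 / Gamma a * t ^ (a / 2) * besselK a (2 * √t)) := by
  have hS : MeasurableSet {p : ℝ × ℝ | t < p.1 * p.2} :=
    measurableSet_lt measurable_const (measurable_fst.mul measurable_snd)
  have := isProbabilityMeasure_expMeasure one_pos
  have hpdf : Measurable (gammaPDF a 1) := (measurable_gammaPDFReal a 1).ennreal_ofReal
  have hmeas : Measurable fun x => expMeasure 1 {y | t < x * y} :=
    measurable_measure_prodMk_left hS
  rw [gammaMeasure, lintegral_withDensity_eq_lintegral_mul _ hpdf hmeas]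
  simp only [Pi.mul_apply, gammaPDF_mul_expMeasure_lt_mul ha ht]
  rw [lintegral_indicator measurableSet_Ioi, ← ofReal_integral_eq_lintegral_ofReal
      ((integrableOn_rpow_mul_exp_neg_sub_div a ht).const_mul _)
      (ae_restrict_of_forall_mem measurableSet_Ioi fun x (hx : 0 < x) => by positivity),
    integral_const_mul, integral_rpow_mul_exp_neg_sub_div a ht]
  ring_nf

theorem ProbabilityTheory.IndepFun.measure_lt_mul {Ω : Type*} [MeasurableSpace Ω] {μ : Measure Ω}
    [IsFiniteMeasure μ] {X Y : Ω → ℝ} (hX : AEMeasurable X μ) (hY : AEMeasurable Y μ)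
    (hXY : IndepFun X Y μ) (t : ℝ) :
    μ {ω | t < X ω * Y ω} = ∫⁻ x, μ.map Y {y | t < x * y} ∂μ.map X := by
  have hS : MeasurableSet {p : ℝ × ℝ | t < p.1 * p.2} :=
    measurableSet_lt measurable_const (measurable_fst.mul measurable_snd)
  change _ = ∫⁻ x, μ.map Y (Prod.mk x ⁻¹' {p : ℝ × ℝ | t < p.1 * p.2}) ∂μ.map X
  rw [← Measure.prod_apply hS, ← (indepFun_iff_map_prod_eq_prod_map_map hX hY).1 hXY,
    Measure.map_apply_of_aemeasurable (hX.prodMk hY) hS]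
  rfl

theorem stmt_4 (Q : ℕ) (hQ : 1 ≤ Q)
    {Ω : Type*} [MeasureSpace Ω] [IsProbabilityMeasure (ℙ : Measure Ω)]
    (X Y : Ω → ℝ)
    (hX : Measure.map X ℙ = gammaMeasure Q 1)
    (hY : Measure.map Y ℙ = expMeasure 1)
    (hXY : IndepFun X Y)
    (t : ℝ) (ht : 0 < t) :
    (ℙ {ω | X ω * Y ω ≤ t}).toReal =
      1 - (2 / Real.Gamma Q) * t ^ ((Q : ℝ) / 2) * besselK Q (2 * Real.sqrt t) := by
  have hQ_pos : (0 : ℝ) < Q := by exact_mod_cast hQ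
  have hXm : AEMeasurable X ℙ := .of_map_ne_zero <| by
    simpa [hX] using (isProbabilityMeasure_gammaMeasure hQ_pos one_pos).ne_zero
  have hYm : AEMeasurable Y ℙ := .of_map_ne_zero <| by
    simpa [hY] using (isProbabilityMeasure_expMeasure one_pos).ne_zero
  have hgt : ℙ {ω | t < X ω * Y ω} =
      ENNReal.ofReal (2 / Gamma Q * t ^ ((Q : ℝ) / 2) * besselK Q (2 * √t)) := by
    rw [hXY.measure_lt_mul hXm hYm, hX, hY, lintegral_expMeasure_lt_mul_gammaMeasure hQ_pos ht]
  have hle : {ω | X ω * Y ω ≤ t} = {ω | t < X ω * Y ω}ᶜ := by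
    ext ω
    simp
  have hnull : NullMeasurableSet {ω | t < X ω * Y ω} ℙ :=
    nullMeasurableSet_lt aemeasurable_const (hXm.mul hYm)
  have hK := besselK_nonneg Q (2 * √t)
  rw [← measureReal_def, hle, probReal_compl_eq_one_sub₀ hnull, measureReal_def, hgt,
    ENNReal.toReal_ofReal (by positivity)]
end

section
/- Let N ≥ 1 be an integer. Then lim_{ξ→0⁺} (1 − 2·√ξ·K₁(2·√ξ))^N / (ξ^N·(−ln ξ)^N) = 1. -/
/-!
Differentiating `-exp (-x sinh t)` gives `∫₀^∞ x cosh t e^{-x sinh t} dt = 1`, hence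
`1 - x K₁(x) = ∫₀^∞ x cosh t e^{-x cosh t} (e^{x e^{-t}} - 1) dt`.
As `A ≤ e^A - 1 ≤ A e^A` and `cosh t e^{-t} = (1 + e^{-2t}) / 2`, this integral lies between
`x²/2 K₀(x)` and `eˣ x²/2 (K₀(x) + 1/2)`, so `1 - x K₁(x) ~ x²/2 K₀(x)` as `K₀(x) → ∞`.
Comparing `e^{-x cosh t}` with `1 - x eᵗ` on `[0, -log x]`, and with `1 / (1 + x eᵗ / 2)` on
`(0, ∞)`, shows `K₀(x) = -log x + O(1)`. At `x = 2√ξ` this gives `1 - 2√ξ K₁(2√ξ) ~ ξ (-log ξ)`.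
-/

open Filter

open MeasureTheory Real Set Topology Asymptotics

lemma cosh_le_exp {t : ℝ} (ht : 0 ≤ t) : cosh t ≤ exp t := by
  rw [cosh_eq]
  linarith [exp_le_exp.2 (show -t ≤ t by linarith)]

lemma cosh_mul_exp_neg (t : ℝ) : cosh t * exp (-t) = (1 + exp (-2 * t)) / 2 := by
  have h : exp t * exp (-t) = 1 := by rw [← exp_add, add_neg_cancel, exp_zero]
  rw [cosh_eq, show -2 * t = -t + -t by ring, exp_add]
  linear_combination h / 2

lemma exp_neg_mul_sinh (x t : ℝ) :
    exp (-x * sinh t) = exp (-x * cosh t) * exp (x * exp (-t)) := by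
  rw [← exp_add, ← cosh_sub_sinh]
  ring_nf

lemma exp_sub_one_le_mul_exp (a : ℝ) : exp a - 1 ≤ a * exp a := by
  have h : exp (-a) * exp a = 1 := by rw [← exp_add, neg_add_cancel, exp_zero]
  nlinarith [add_one_le_exp (-a), exp_pos a]

lemma tendsto_neg_log_nhdsGT_zero : Tendsto (fun x => -log x) (𝓝[>] 0) atTop :=
  tendsto_neg_atBot_atTop.comp tendsto_log_nhdsGT_zero

lemma hasDerivAt_neg_exp_neg_mul_sinh (x t : ℝ) :
    HasDerivAt (fun t => -exp (-x * sinh t)) (x * cosh t * exp (-x * sinh t)) t :=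
  (((hasDerivAt_sinh t).const_mul (-x)).exp.neg).congr_deriv (by ring)

section

variable {x : ℝ}

lemma tendsto_neg_exp_neg_mul_sinh_atTop (hx : 0 < x) :
    Tendsto (fun t => -exp (-x * sinh t)) atTop (𝓝 0) := by
  have hsinh : Tendsto sinh atTop atTop :=
    tendsto_atTop_mono' _ (eventually_ge_atTop 0 |>.mono fun t ht => self_le_sinh_iff.2 ht)
      tendsto_id
  simpa using (tendsto_exp_atBot.comp (hsinh.const_mul_atTop_of_neg (neg_lt_zero.2 hx))).neg

lemma integrableOn_mul_cosh_mul_exp_neg_mul_sinh (hx : 0 < x) :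
    IntegrableOn (fun t => x * cosh t * exp (-x * sinh t)) (Ioi 0) :=
  integrableOn_Ioi_deriv_of_nonneg' (fun t _ => hasDerivAt_neg_exp_neg_mul_sinh x t)
    (fun t _ => by positivity) (tendsto_neg_exp_neg_mul_sinh_atTop hx)

lemma integral_mul_cosh_mul_exp_neg_mul_sinh (hx : 0 < x) :
    ∫ t in Ioi 0, x * cosh t * exp (-x * sinh t) = 1 := by
  rw [integral_Ioi_of_hasDerivAt_of_nonneg' (fun t _ => hasDerivAt_neg_exp_neg_mul_sinh x t)
    (fun t _ => by positivity) (tendsto_neg_exp_neg_mul_sinh_atTop hx)]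
  simp

lemma exp_neg_mul_cosh_le (hx : 0 < x) (t : ℝ) :
    exp (-x * cosh t) ≤ 2 * exp (-t) / (2 * exp (-t) + x) := by
  have hcosh : exp t / 2 ≤ cosh t := by rw [cosh_eq]; linarith [exp_pos (-t)]
  have hE : exp (-x * cosh t) * exp (x * cosh t) = 1 := by rw [← exp_add]; simp
  have hinv : exp (-t) * exp t = 1 := by rw [← exp_add]; simp
  have hkey : exp (-x * cosh t) * (2 + x * exp t) ≤ 2 :=
    calc exp (-x * cosh t) * (2 + x * exp t) ≤ exp (-x * cosh t) * (2 * exp (x * cosh t)) := by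
          gcongr
          nlinarith [add_one_le_exp (x * cosh t)]
      _ = 2 := by rw [mul_left_comm, hE, mul_one]
  rw [le_div_iff₀ (by positivity)]
  calc exp (-x * cosh t) * (2 * exp (-t) + x)
      = exp (-t) * (exp (-x * cosh t) * (2 + x * exp t)) := by
        linear_combination (-(x * exp (-x * cosh t))) * hinv
    _ ≤ exp (-t) * 2 := by gcongr
    _ = 2 * exp (-t) := mul_comm _ _

lemma sq_div_two_mul_exp_neg_mul_cosh_le (hx : 0 ≤ x) (t : ℝ) :
    x ^ 2 / 2 * exp (-x * cosh t) ≤ x * cosh t * (exp (-x * sinh t) - exp (-x * cosh t)) := by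
  have hA : x * exp (-t) ≤ exp (x * exp (-t)) - 1 := by linarith [add_one_le_exp (x * exp (-t))]
  calc x ^ 2 / 2 * exp (-x * cosh t)
      ≤ x ^ 2 / 2 * (1 + exp (-2 * t)) * exp (-x * cosh t) := by
        gcongr
        exact le_mul_of_one_le_right (by positivity) (le_add_of_nonneg_right (exp_pos _).le)
    _ = x * cosh t * exp (-x * cosh t) * (x * exp (-t)) := by
        linear_combination (-(x ^ 2) * exp (-x * cosh t)) * cosh_mul_exp_neg t
    _ ≤ x * cosh t * exp (-x * cosh t) * (exp (x * exp (-t)) - 1) := by gcongr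
    _ = x * cosh t * (exp (-x * sinh t) - exp (-x * cosh t)) := by rw [exp_neg_mul_sinh]; ring

lemma mul_cosh_mul_exp_sub_exp_le (hx : 0 ≤ x) {t : ℝ} (ht : 0 ≤ t) :
    x * cosh t * (exp (-x * sinh t) - exp (-x * cosh t))
      ≤ exp x * (x ^ 2 / 2) * (exp (-x * cosh t) + exp (-2 * t)) := by
  have hA : exp (x * exp (-t)) - 1 ≤ x * exp (-t) * exp x :=
    (exp_sub_one_le_mul_exp _).trans (by
      gcongr
      exact mul_le_of_le_one_right hx (exp_le_one_iff.2 (neg_nonpos.2 ht)))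
  have hE : exp (-x * cosh t) ≤ 1 :=
    exp_le_one_iff.2 (by nlinarith [cosh_pos t])
  calc x * cosh t * (exp (-x * sinh t) - exp (-x * cosh t))
      = x * cosh t * exp (-x * cosh t) * (exp (x * exp (-t)) - 1) := by
        rw [exp_neg_mul_sinh]; ring
    _ ≤ x * cosh t * exp (-x * cosh t) * (x * exp (-t) * exp x) := by gcongr
    _ = exp x * (x ^ 2 / 2) * ((1 + exp (-2 * t)) * exp (-x * cosh t)) := by
        linear_combination (x ^ 2 * exp (-x * cosh t) * exp x) * cosh_mul_exp_neg t
    _ ≤ exp x * (x ^ 2 / 2) * (exp (-x * cosh t) + exp (-2 * t)) := by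
        gcongr
        nlinarith [exp_pos (-2 * t)]

lemma besselK_zero_eq_integral (x : ℝ) : besselK 0 x = ∫ t in Ioi 0, exp (-x * cosh t) := by
  simp [besselK]

lemma besselK_one_eq_integral (x : ℝ) :
    besselK 1 x = ∫ t in Ioi 0, cosh t * exp (-x * cosh t) := by
  simp [besselK, mul_comm]

lemma integrableOn_cosh_mul_exp_neg_mul_cosh (hx : 0 < x) :
    IntegrableOn (fun t => cosh t * exp (-x * cosh t)) (Ioi 0) := by
  refine ((integrableOn_mul_cosh_mul_exp_neg_mul_sinh hx).const_mul x⁻¹).mono'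
    (by fun_prop) (ae_of_all _ fun t => ?_)
  have hexp : exp (-x * cosh t) ≤ exp (-x * sinh t) :=
    exp_le_exp.2 (by nlinarith [sinh_lt_cosh t])
  rw [norm_of_nonneg (by positivity), ← mul_assoc, ← mul_assoc, inv_mul_cancel₀ hx.ne',
    one_mul]
  exact mul_le_mul_of_nonneg_left hexp (cosh_pos t).le

lemma integrableOn_exp_neg_mul_cosh (hx : 0 < x) :
    IntegrableOn (fun t => exp (-x * cosh t)) (Ioi 0) :=
  (integrableOn_cosh_mul_exp_neg_mul_cosh hx).mono' (by fun_prop) (ae_of_all _ fun t => by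
    rw [norm_of_nonneg (exp_pos _).le]
    exact le_mul_of_one_le_left (exp_pos _).le (one_le_cosh t))

lemma besselK_zero_le (hx : 0 < x) : besselK 0 x ≤ log (2 + x) - log x := by
  have hderiv : ∀ t ∈ Ici (0 : ℝ), HasDerivAt (fun t => -log (2 * exp (-t) + x))
      (2 * exp (-t) / (2 * exp (-t) + x)) t := fun t _ => by
    have := (((hasDerivAt_neg t).exp.const_mul 2).add_const x).log (by positivity)
    exact this.neg.congr_deriv (by ring)
  have hlim : Tendsto (fun t => -log (2 * exp (-t) + x)) atTop (𝓝 (-log x)) := by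
    have h : Tendsto (fun t => 2 * exp (-t) + x) atTop (𝓝 (2 * 0 + x)) :=
      ((tendsto_exp_neg_atTop_nhds_zero.const_mul 2).add_const x)
    rw [mul_zero, zero_add] at h
    exact ((continuousAt_log hx.ne').tendsto.comp h).neg
  have hnonneg : ∀ t ∈ Ioi (0 : ℝ), 0 ≤ 2 * exp (-t) / (2 * exp (-t) + x) :=
    fun t _ => by positivity
  calc besselK 0 x ≤ ∫ t in Ioi 0, 2 * exp (-t) / (2 * exp (-t) + x) := by
        rw [besselK_zero_eq_integral]
        exact setIntegral_mono_on (integrableOn_exp_neg_mul_cosh hx)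
          (integrableOn_Ioi_deriv_of_nonneg' hderiv hnonneg hlim) measurableSet_Ioi
          fun t _ => exp_neg_mul_cosh_le hx t
    _ = log (2 + x) - log x := by
        rw [integral_Ioi_of_hasDerivAt_of_nonneg' hderiv hnonneg hlim]
        simp only [neg_zero, exp_zero, mul_one]
        ring

lemma neg_log_sub_one_le_besselK_zero (hx : 0 < x) (hx1 : x ≤ 1) :
    -log x - 1 ≤ besselK 0 x := by
  set T := -log x
  have hT : 0 ≤ T := neg_nonneg.2 (log_nonpos hx.le hx1)
  calc -log x - 1 ≤ ∫ t in (0 : ℝ)..T, (1 - x * exp t) := by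
        rw [intervalIntegral.integral_sub intervalIntegrable_const
          (intervalIntegral.intervalIntegrable_exp.const_mul x),
          intervalIntegral.integral_const_mul, integral_exp, exp_neg, exp_log hx]
        simp only [intervalIntegral.integral_const, smul_eq_mul, exp_zero, mul_sub,
          mul_inv_cancel₀ hx.ne']
        linarith
    _ ≤ ∫ t in (0 : ℝ)..T, exp (-x * cosh t) :=
        intervalIntegral.integral_mono_on hT
          ((by fun_prop : Continuous fun t => 1 - x * exp t).intervalIntegrable _ _)
          ((by fun_prop : Continuous fun t => exp (-x * cosh t)).intervalIntegrable _ _)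
          fun t ht => by
          nlinarith [add_one_le_exp (-x * cosh t), cosh_le_exp ht.1]
    _ = ∫ t in Ioc 0 T, exp (-x * cosh t) := intervalIntegral.integral_of_le hT
    _ ≤ besselK 0 x := by
        rw [besselK_zero_eq_integral]
        exact setIntegral_mono_set (integrableOn_exp_neg_mul_cosh hx)
          (ae_of_all _ fun t => (exp_pos _).le) Ioc_subset_Ioi_self.eventuallyLE

lemma besselK_zero_isEquivalent_neg_log : besselK 0 ~[𝓝[>] 0] fun x => -log x := by
  refine IsLittleO.isEquivalent (IsBigO.trans_isLittleO (g := fun _ => (1 : ℝ)) ?_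
    ((isLittleO_one_left_iff ℝ).2 (tendsto_abs_atTop_atTop.comp tendsto_neg_log_nhdsGT_zero)))
  refine IsBigO.of_bound 2 ?_
  filter_upwards [Ioo_mem_nhdsGT one_pos] with x ⟨hx0, hx1⟩
  have hupper := besselK_zero_le hx0
  have hlower := neg_log_sub_one_le_besselK_zero hx0 hx1.le
  have hlog := log_le_sub_one_of_pos (show 0 < 2 + x by linarith)
  rw [norm_one, mul_one, Pi.sub_apply, Real.norm_eq_abs, abs_le]
  constructor <;> linarith

lemma integrableOn_mul_cosh_mul_exp_sub_exp (hx : 0 < x) :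
    IntegrableOn (fun t => x * cosh t * (exp (-x * sinh t) - exp (-x * cosh t))) (Ioi 0) :=
  ((integrableOn_mul_cosh_mul_exp_neg_mul_sinh hx).sub
    ((integrableOn_cosh_mul_exp_neg_mul_cosh hx).const_mul x)).congr_fun
    (fun t _ => by simp only [Pi.sub_apply]; ring) measurableSet_Ioi

lemma one_sub_mul_besselK_one_eq_integral (hx : 0 < x) :
    1 - x * besselK 1 x = ∫ t in Ioi 0, x * cosh t * (exp (-x * sinh t) - exp (-x * cosh t)) := by
  rw [besselK_one_eq_integral, ← integral_mul_cosh_mul_exp_neg_mul_sinh hx,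
    ← integral_const_mul,
    ← integral_sub (integrableOn_mul_cosh_mul_exp_neg_mul_sinh hx)
      ((integrableOn_cosh_mul_exp_neg_mul_cosh hx).const_mul x)]
  congr 1 with t
  ring

lemma sq_div_two_mul_besselK_zero_le (hx : 0 < x) :
    x ^ 2 / 2 * besselK 0 x ≤ 1 - x * besselK 1 x := by
  rw [one_sub_mul_besselK_one_eq_integral hx, besselK_zero_eq_integral, ← integral_const_mul]
  exact setIntegral_mono_on ((integrableOn_exp_neg_mul_cosh hx).const_mul _)
    (integrableOn_mul_cosh_mul_exp_sub_exp hx) measurableSet_Ioi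
    fun t _ => sq_div_two_mul_exp_neg_mul_cosh_le hx.le t

lemma one_sub_mul_besselK_one_le (hx : 0 < x) :
    1 - x * besselK 1 x ≤ exp x * (x ^ 2 / 2) * (besselK 0 x + 1 / 2) := by
  have hexp2 : IntegrableOn (fun t : ℝ => exp (-2 * t)) (Ioi 0) :=
    integrableOn_exp_mul_Ioi (by norm_num) 0
  calc 1 - x * besselK 1 x
      ≤ ∫ t in Ioi 0, exp x * (x ^ 2 / 2) * (exp (-x * cosh t) + exp (-2 * t)) := by
        rw [one_sub_mul_besselK_one_eq_integral hx]
        exact setIntegral_mono_on (integrableOn_mul_cosh_mul_exp_sub_exp hx)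
          (((integrableOn_exp_neg_mul_cosh hx).add hexp2).const_mul _) measurableSet_Ioi
          fun t ht => mul_cosh_mul_exp_sub_exp_le hx.le (le_of_lt ht)
    _ = exp x * (x ^ 2 / 2) * (besselK 0 x + 1 / 2) := by
        rw [integral_const_mul, integral_add (integrableOn_exp_neg_mul_cosh hx) hexp2,
          integral_exp_mul_Ioi (by norm_num), besselK_zero_eq_integral]
        norm_num

end

lemma tendsto_besselK_zero_atTop : Tendsto (besselK 0) (𝓝[>] 0) atTop :=
  besselK_zero_isEquivalent_neg_log.symm.tendsto_atTop tendsto_neg_log_nhdsGT_zero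

lemma one_sub_mul_besselK_one_isEquivalent :
    (fun x => 1 - x * besselK 1 x) ~[𝓝[>] 0] fun x => x ^ 2 / 2 * besselK 0 x := by
  refine isEquivalent_of_tendsto_one ?_
  have hupper : Tendsto (fun x => exp x * (1 + (2 * besselK 0 x)⁻¹)) (𝓝[>] 0) (𝓝 1) := by
    have h := ((continuous_exp.tendsto 0).mono_left nhdsWithin_le_nhds).mul
      ((tendsto_besselK_zero_atTop.const_mul_atTop two_pos).inv_tendsto_atTop.const_add 1)
    simpa using h
  refine tendsto_of_tendsto_of_tendsto_of_le_of_le' tendsto_const_nhds hupper ?_ ?_ <;>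
    filter_upwards [self_mem_nhdsWithin, tendsto_besselK_zero_atTop.eventually_gt_atTop 0]
      with x (hx : 0 < x) hK
  · exact (one_le_div (by positivity)).2 (sq_div_two_mul_besselK_zero_le hx)
  · rw [Pi.div_apply, div_le_iff₀ (by positivity)]
    calc 1 - x * besselK 1 x ≤ exp x * (x ^ 2 / 2) * (besselK 0 x + 1 / 2) :=
          one_sub_mul_besselK_one_le hx
      _ = exp x * (1 + (2 * besselK 0 x)⁻¹) * (x ^ 2 / 2 * besselK 0 x) := by
          field_simp

lemma one_sub_mul_besselK_one_isEquivalent_neg_log :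
    (fun x => 1 - x * besselK 1 x) ~[𝓝[>] 0] fun x => x ^ 2 / 2 * -log x :=
  one_sub_mul_besselK_one_isEquivalent.trans
    (IsEquivalent.refl.mul besselK_zero_isEquivalent_neg_log)

lemma one_sub_two_sqrt_mul_besselK_one_isEquivalent :
    (fun ξ => 1 - 2 * √ξ * besselK 1 (2 * √ξ)) ~[𝓝[>] 0] fun ξ => ξ * -log ξ := by
  have hsub : Tendsto (fun ξ => 2 * √ξ) (𝓝[>] 0) (𝓝[>] 0) := by
    refine tendsto_nhdsWithin_iff.2 ⟨?_, ?_⟩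
    · simpa using ((continuous_sqrt.tendsto 0).const_mul 2).mono_left nhdsWithin_le_nhds
    · filter_upwards [self_mem_nhdsWithin] with ξ (hξ : 0 < ξ)
      exact mul_pos two_pos (sqrt_pos.2 hξ)
  have hlog : (fun ξ => -log ξ / 2 + -log 2) ~[𝓝[>] 0] fun ξ => -log ξ / 2 :=
    IsEquivalent.refl.add_const_of_norm_tendsto_atTop
      (tendsto_abs_atTop_atTop.comp (tendsto_neg_log_nhdsGT_zero.atTop_div_const two_pos))
  refine (one_sub_mul_besselK_one_isEquivalent_neg_log.comp_tendsto hsub).trans ?_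
  refine (((IsEquivalent.refl (u := fun ξ : ℝ => 2 * ξ)).mul hlog).congr_left ?_).congr_right ?_
  · filter_upwards [self_mem_nhdsWithin] with ξ (hξ : 0 < ξ)
    simp only [Pi.mul_apply, Function.comp_apply]
    rw [mul_pow, sq_sqrt hξ.le, log_mul two_ne_zero (sqrt_pos.2 hξ).ne', log_sqrt hξ.le]
    ring
  · exact Eventually.of_forall fun ξ => by simp only [Pi.mul_apply]; ring

theorem stmt_7_general (N : ℕ) :
    Tendsto
      (fun ξ : ℝ =>
        (1 - 2 * Real.sqrt ξ * besselK 1 (2 * Real.sqrt ξ)) ^ N /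
          (ξ ^ N * (-Real.log ξ) ^ N))
      (nhdsWithin 0 (Set.Ioi 0)) (nhds 1) := by
  have hpos : ∀ᶠ ξ in 𝓝[>] (0 : ℝ), (ξ * -log ξ) ^ N ≠ 0 := by
    filter_upwards [Ioo_mem_nhdsGT one_pos] with ξ ⟨hξ0, hξ1⟩
    exact pow_ne_zero _ (mul_pos hξ0 (neg_pos.2 (log_neg hξ0 hξ1))).ne'
  refine ((isEquivalent_iff_tendsto_one hpos).1
    (one_sub_two_sqrt_mul_besselK_one_isEquivalent.pow N)).congr fun ξ => ?_
  simp only [Pi.div_apply, Pi.pow_apply, mul_pow]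

theorem stmt_7 (N : ℕ) (hN : 1 ≤ N) :
    Tendsto
      (fun ξ : ℝ =>
        (1 - 2 * Real.sqrt ξ * besselK 1 (2 * Real.sqrt ξ)) ^ N /
          (ξ ^ N * (-Real.log ξ) ^ N))
      (nhdsWithin 0 (Set.Ioi 0)) (nhds 1) :=
  stmt_7_general N
end

section
/- Let P ≥ 1 and Q ≥ 2 be integers. Then lim_{ξ→0⁺} (1 − (2/Γ(Q))·ξ^{Q/2}·K_Q(2·√ξ))^P / (ξ^P/(Q−1)^P) = 1. -/
/-!
The substitution `s = √ξ · eᵗ` turns `2 ξ^{Q/2} K_Q(2√ξ)` into `∫₀^∞ e^{-s-ξ/s} s^{Q-1} ds`,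
so `Γ(Q) - 2 ξ^{Q/2} K_Q(2√ξ) = ∫₀^∞ e^{-s} (1 - e^{-ξ/s}) s^{Q-1} ds`. Since
`0 ≤ 1 - e^{-ξ/s} ≤ ξ/s`, dominated convergence shows that this is `ξ Γ(Q-1) + o(ξ)`, and
`(Q-1) Γ(Q-1) = Γ(Q)`.
-/

open Filter

open MeasureTheory Set Real Topology

lemma two_mul_besselK_eq_integral {ν x : ℝ}
    (hf : Integrable fun t => exp (-x * cosh t) * exp (ν * t)) :
    2 * besselK ν x = ∫ t, exp (-x * cosh t) * exp (ν * t) := by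
  have hsymm :
      ∫ t, exp (-x * cosh t) * exp (ν * -t) = ∫ t, exp (-x * cosh t) * exp (ν * t) := by
    simpa only [cosh_neg] using
      integral_neg_eq_self (fun t => exp (-x * cosh t) * exp (ν * t)) volume
  have hf_neg : Integrable fun t => exp (-x * cosh t) * exp (ν * -t) := by
    simpa only [cosh_neg] using hf.comp_neg
  calc 2 * besselK ν x = ∫ t, exp (-x * cosh |t|) * cosh (ν * |t|) := by
        rw [besselK, integral_comp_abs (f := fun t => exp (-x * cosh t) * cosh (ν * t))]
    _ = ∫ t, (exp (-x * cosh t) * exp (ν * t) + exp (-x * cosh t) * exp (ν * -t)) / 2 := by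
        congr 1 with t
        have hcosh : cosh (ν * |t|) = cosh (ν * t) := by
          rcases abs_choice t with h | h <;> simp only [h, mul_neg, cosh_neg]
        rw [cosh_abs, hcosh, cosh_eq (ν * t), mul_neg]
        ring
    _ = ∫ t, exp (-x * cosh t) * exp (ν * t) := by
        rw [integral_div, integral_add hf hf_neg, hsymm]; ring

lemma image_const_mul_exp {c : ℝ} (hc : 0 < c) : (fun t => c * exp t) '' univ = Ioi 0 := by
  ext y
  refine ⟨fun ⟨t, _, hy⟩ => hy ▸ mul_pos hc (exp_pos t),
    fun hy => ⟨log (y / c), trivial, ?_⟩⟩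
  simp only [exp_log (div_pos hy hc), mul_div_cancel₀ y hc.ne']

lemma hasDerivWithinAt_const_mul_exp (c : ℝ) (t : ℝ) :
    HasDerivWithinAt (fun t => c * exp t) (c * exp t) univ t :=
  ((hasDerivAt_exp t).const_mul c).hasDerivWithinAt

lemma injOn_const_mul_exp {c : ℝ} (hc : 0 < c) : InjOn (fun t => c * exp t) univ :=
  fun _ _ _ _ h => exp_injective (mul_left_cancel₀ hc.ne' h)

lemma integral_Ioi_zero_eq_integral_const_mul_exp {c : ℝ} (hc : 0 < c) (g : ℝ → ℝ) :
    ∫ s in Ioi 0, g s = ∫ t, c * exp t * g (c * exp t) := by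
  rw [← image_const_mul_exp hc, integral_image_eq_integral_abs_deriv_smul MeasurableSet.univ
    (fun t _ => hasDerivWithinAt_const_mul_exp c t) (injOn_const_mul_exp hc), Measure.restrict_univ]
  simp only [smul_eq_mul, abs_of_pos (mul_pos hc (exp_pos _))]

lemma integrableOn_Ioi_zero_iff_const_mul_exp {c : ℝ} (hc : 0 < c) (g : ℝ → ℝ) :
    IntegrableOn g (Ioi 0) ↔ Integrable fun t => c * exp t * g (c * exp t) := by
  rw [← image_const_mul_exp hc,
    integrableOn_image_iff_integrableOn_abs_deriv_smul MeasurableSet.univ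
      (fun t _ => hasDerivWithinAt_const_mul_exp c t) (injOn_const_mul_exp hc), integrableOn_univ]
  simp only [smul_eq_mul, abs_of_pos (mul_pos hc (exp_pos _))]

lemma integrableOn_exp_neg_sub_div_mul_rpow {ν ξ : ℝ} (hν : 0 < ν) (hξ : 0 ≤ ξ) :
    IntegrableOn (fun s => exp (-s - ξ / s) * s ^ (ν - 1)) (Ioi 0) := by
  refine (GammaIntegral_convergent hν).mono' ?_ ?_
  · refine ContinuousOn.aestronglyMeasurable ?_ measurableSet_Ioi
    refine ContinuousOn.mul ?_ (continuousOn_id.rpow_const fun s hs => Or.inl (ne_of_gt hs))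
    exact continuous_exp.comp_continuousOn
      (continuousOn_id.neg.sub (continuousOn_const.div continuousOn_id fun s hs => ne_of_gt hs))
  · refine (ae_restrict_iff' measurableSet_Ioi).2 (Eventually.of_forall fun s (hs : 0 < s) => ?_)
    rw [norm_of_nonneg (by positivity)]
    gcongr
    exact sub_le_self _ (div_nonneg hξ hs.le)

lemma exp_neg_sub_sq_div_mul_rpow_comp_const_mul_exp {c : ℝ} (hc : 0 < c) (t ν : ℝ) :
    c * exp t * (exp (-(c * exp t) - c ^ 2 / (c * exp t)) * (c * exp t) ^ (ν - 1))
      = c ^ ν * (exp (-(2 * c) * cosh t) * exp (ν * t)) := by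
  have hct : 0 < c * exp t := mul_pos hc (exp_pos t)
  have hexp : -(c * exp t) - c ^ 2 / (c * exp t) = -(2 * c) * cosh t := by
    rw [cosh_eq, exp_neg]
    field_simp
    ring
  have hpow : c * exp t * (c * exp t) ^ (ν - 1) = c ^ ν * exp (ν * t) := by
    rw [rpow_sub_one hct.ne', mul_div_cancel₀ _ hct.ne', mul_rpow hc.le (exp_pos t).le,
      ← exp_mul, mul_comm t]
  rw [hexp]
  linear_combination exp (-(2 * c) * cosh t) * hpow

theorem integral_exp_neg_sub_sq_div_mul_rpow_eq_besselK {ν c : ℝ} (hν : 0 < ν) (hc : 0 < c) :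
    ∫ s in Ioi 0, exp (-s - c ^ 2 / s) * s ^ (ν - 1) = 2 * c ^ ν * besselK ν (2 * c) := by
  have hint := (integrableOn_Ioi_zero_iff_const_mul_exp hc _).1
    (integrableOn_exp_neg_sub_div_mul_rpow hν (sq_nonneg c))
  simp only [exp_neg_sub_sq_div_mul_rpow_comp_const_mul_exp hc] at hint
  have hint' := hint.const_mul (c ^ ν)⁻¹
  simp only [← mul_assoc, inv_mul_cancel₀ (rpow_pos_of_pos hc ν).ne', one_mul] at hint'
  rw [integral_Ioi_zero_eq_integral_const_mul_exp hc]
  simp only [exp_neg_sub_sq_div_mul_rpow_comp_const_mul_exp hc]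
  rw [integral_const_mul, ← two_mul_besselK_eq_integral hint']
  ring

lemma tendsto_one_sub_exp_neg_div_div (s : ℝ) :
    Tendsto (fun ξ => (1 - exp (-(ξ / s))) / ξ) (𝓝[≠] 0) (𝓝 s⁻¹) := by
  have hderiv : HasDerivAt (fun ξ => 1 - exp (-(ξ / s))) s⁻¹ 0 := by
    simpa using (((hasDerivAt_id (0 : ℝ)).div_const s).neg.exp).const_sub 1
  simpa [div_eq_inv_mul] using hderiv.tendsto_slope_zero

lemma one_sub_exp_neg_div_div_mem_Icc {ξ s : ℝ} (hξ : 0 < ξ) (hs : 0 < s) :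
    (1 - exp (-(ξ / s))) / ξ ∈ Icc 0 s⁻¹ := by
  have hle : 1 - exp (-(ξ / s)) ≤ ξ / s := by linarith [one_sub_le_exp_neg (ξ / s)]
  have hnonneg : 0 ≤ 1 - exp (-(ξ / s)) := by
    linarith [exp_le_one_iff.2 (neg_nonpos.2 (div_pos hξ hs).le)]
  refine ⟨div_nonneg hnonneg hξ.le, ?_⟩
  rw [div_le_iff₀ hξ, inv_mul_eq_div]
  exact hle

lemma integrableOn_exp_neg_mul_inv_mul_rpow {ν : ℝ} (hν : 1 < ν) :
    IntegrableOn (fun s => exp (-s) * s⁻¹ * s ^ (ν - 1)) (Ioi 0) := by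
  refine (GammaIntegral_convergent (sub_pos.2 hν)).congr_fun (fun s (hs : 0 < s) => ?_)
    measurableSet_Ioi
  simp only [rpow_sub_one hs.ne']
  ring

theorem tendsto_integral_exp_neg_mul_one_sub_exp_neg_div {ν : ℝ} (hν : 1 < ν) :
    Tendsto (fun ξ => ∫ s in Ioi 0, exp (-s) * ((1 - exp (-(ξ / s))) / ξ) * s ^ (ν - 1))
      (𝓝[>] 0) (𝓝 (Gamma (ν - 1))) := by
  have hGamma : Gamma (ν - 1) = ∫ s in Ioi 0, exp (-s) * s⁻¹ * s ^ (ν - 1) := by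
    rw [Gamma_eq_integral (sub_pos.2 hν)]
    refine setIntegral_congr_fun measurableSet_Ioi fun s (hs : 0 < s) => ?_
    simp only [rpow_sub_one hs.ne']
    ring
  rw [hGamma]
  refine tendsto_integral_filter_of_dominated_convergence _ ?_ ?_
    (integrableOn_exp_neg_mul_inv_mul_rpow hν) ?_
  · filter_upwards [self_mem_nhdsWithin] with ξ (hξ : 0 < ξ)
    refine ContinuousOn.aestronglyMeasurable ?_ measurableSet_Ioi
    have hdiv : ContinuousOn (fun s => ξ / s) (Ioi 0) :=
      continuousOn_const.div continuousOn_id fun s hs => ne_of_gt hs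
    exact ((continuous_exp.comp continuous_neg).continuousOn.mul
      ((continuousOn_const.sub (continuous_exp.comp_continuousOn hdiv.neg)).div_const ξ)).mul
      (continuousOn_id.rpow_const fun s hs => Or.inl (ne_of_gt hs))
  · filter_upwards [self_mem_nhdsWithin] with ξ (hξ : 0 < ξ)
    refine (ae_restrict_iff' measurableSet_Ioi).2 (Eventually.of_forall fun s (hs : 0 < s) => ?_)
    obtain ⟨hlo, hhi⟩ := one_sub_exp_neg_div_div_mem_Icc hξ hs
    rw [norm_of_nonneg (by positivity)]
    gcongr
  · refine (ae_restrict_iff' measurableSet_Ioi).2 (Eventually.of_forall fun s _ => ?_)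
    exact ((tendsto_one_sub_exp_neg_div_div s).mono_left
      (nhdsWithin_mono 0 fun ξ (hξ : 0 < ξ) => hξ.ne')).const_mul _ |>.mul_const _

theorem tendsto_gamma_sub_besselK_div {ν : ℝ} (hν : 1 < ν) :
    Tendsto (fun ξ => (Gamma ν - 2 * ξ ^ (ν / 2) * besselK ν (2 * √ξ)) / ξ)
      (𝓝[>] 0) (𝓝 (Gamma (ν - 1))) := by
  have hν₀ : 0 < ν := one_pos.trans hν
  refine (tendsto_integral_exp_neg_mul_one_sub_exp_neg_div hν).congr' ?_
  filter_upwards [self_mem_nhdsWithin] with ξ (hξ : 0 < ξ)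
  have hbessel := integral_exp_neg_sub_sq_div_mul_rpow_eq_besselK hν₀ (sqrt_pos.2 hξ)
  rw [sq_sqrt hξ.le, ← rpow_div_two_eq_sqrt ν hξ.le] at hbessel
  rw [← hbessel, Gamma_eq_integral hν₀, ← integral_sub (GammaIntegral_convergent hν₀)
    (integrableOn_exp_neg_sub_div_mul_rpow hν₀ hξ.le), ← integral_div]
  refine setIntegral_congr_fun measurableSet_Ioi fun s _ => ?_
  rw [sub_eq_add_neg (-s), exp_add]
  ring

theorem tendsto_one_sub_besselK_div {ν : ℝ} (hν : 1 < ν) :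
    Tendsto
      (fun ξ => (1 - 2 / Gamma ν * ξ ^ (ν / 2) * besselK ν (2 * √ξ)) / (ξ / (ν - 1)))
      (𝓝[>] 0) (𝓝 1) := by
  have hν₁ : ν - 1 ≠ 0 := (sub_pos.2 hν).ne'
  have hGamma : (ν - 1) * Gamma (ν - 1) = Gamma ν := by
    simpa using (Gamma_add_one hν₁).symm
  have hGamma₀ : Gamma ν ≠ 0 := (Gamma_pos_of_pos (one_pos.trans hν)).ne'
  have hlim := (tendsto_gamma_sub_besselK_div hν).const_mul ((ν - 1) / Gamma ν)
  rw [div_mul_eq_mul_div, hGamma, div_self hGamma₀] at hlim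
  refine hlim.congr fun ξ => ?_
  field_simp

theorem stmt_8_general (P Q : ℕ) (hQ : 2 ≤ Q) :
    Tendsto
      (fun ξ : ℝ =>
        (1 - (2 / Real.Gamma Q) * ξ ^ ((Q : ℝ) / 2) * besselK Q (2 * Real.sqrt ξ)) ^ P /
          (ξ ^ P / ((Q : ℝ) - 1) ^ P))
      (nhdsWithin 0 (Set.Ioi 0)) (nhds 1) := by
  have hQ₁ : (1 : ℝ) < Q := by exact_mod_cast hQ
  simpa only [div_pow, one_pow] using (tendsto_one_sub_besselK_div hQ₁).pow P

theorem stmt_8 (P Q : ℕ) (hP : 1 ≤ P) (hQ : 2 ≤ Q) :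
    Tendsto
      (fun ξ : ℝ =>
        (1 - (2 / Real.Gamma Q) * ξ ^ ((Q : ℝ) / 2) * besselK Q (2 * Real.sqrt ξ)) ^ P /
          (ξ ^ P / ((Q : ℝ) - 1) ^ P))
      (nhdsWithin 0 (Set.Ioi 0)) (nhds 1) :=
  stmt_8_general P Q hQ
end

section
/- (Lemma 2, closed form.) Let K ≥ 2 and N ≥ 1 be integers, let α₁, α₂ ≥ 0, ρ > 0, let R > 0 be the target rate, set ε = 2^R − 1, and assume τ := α₁² − ε·α₂² > 0. For p = 1, …, N let (X_p, Y_p, Z_p) be mutually independent random variables with X_p, Y_p ~ Exp(1) and Z_p ~ Gamma(K−1,1), the N triples being independent and identically distributed. Then the probability that X_p·Y_p·α₁²/(X_p·Y_p·α₂² + X_p·Z_p + 1/ρ) < ε holds simultaneously for all p = 1, …, N equals ( 1 − 2·√(ε/(ρτ))·K₁(2·√(ε/(ρτ))) / (1 + ε/τ)^{K−1} )^N. -/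
open MeasureTheory ProbabilityTheory

/-!
Given `X = x > 0` and `Z = z ≥ 0`, a branch is not in outage exactly when
`Y ≥ c / x + s z`, where `s = ε / τ` and `c = ε / (ρ τ)`. As `Y ~ Exp(1)` is independent of
`(X, Z)`, this has probability `E[e^{-c/X}] · E[e^{-sZ}]`. The second factor is the Laplace
transform `(1 + s)^{-(K-1)}` of `Gamma(K-1, 1)`; the first is `∫₀^∞ e^{-x - c/x} dx`, which the
substitution `x = √c e^t` together with the symmetry `t ↦ -t` turns into `2√c K₁(2√c)`.
The `N` branches are i.i.d., so the probability that all of them are in outage is the `N`-th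
power of the single-branch one.
-/

open Real Set

lemma integral_exp_mul_eq_integral_cosh_mul {h : ℝ → ℝ} (heven : ∀ t, h (-t) = h t)
    (hint : Integrable fun t => exp t * h t) :
    ∫ t, exp t * h t = ∫ t, cosh t * h t := by
  have hneg : Integrable fun t => exp (-t) * h t := by
    simpa [heven] using hint.comp_neg
  have hsym : ∫ t, exp (-t) * h t = ∫ t, exp t * h t := by
    simpa only [heven] using integral_neg_eq_self (fun t => exp t * h t) volume
  calc ∫ t, exp t * h t = ((∫ t, exp t * h t) + ∫ t, exp (-t) * h t) / 2 := by
        rw [hsym]; ring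
    _ = ∫ t, (exp t * h t + exp (-t) * h t) / 2 := by rw [integral_div, integral_add hint hneg]
    _ = ∫ t, cosh t * h t := by
      congr 1 with t
      rw [cosh_eq]; ring

lemma integrableOn_exp_neg_mul_sub_div {b c : ℝ} (hb : 0 < b) (hc : 0 ≤ c) :
    IntegrableOn (fun x => exp (-(b * x) - c / x)) (Ioi 0) := by
  refine (exp_neg_integrableOn_Ioi 0 hb).mono' (by fun_prop) ?_
  filter_upwards [ae_restrict_mem measurableSet_Ioi] with x (hx : 0 < x)
  rw [norm_of_nonneg (exp_nonneg _), neg_mul]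
  exact exp_le_exp.2 (by have := div_nonneg hc hx.le; linarith)

lemma integral_exp_neg_mul_sub_div_self {b : ℝ} (hb : 0 < b) :
    ∫ x in Ioi 0, exp (-(b * x) - b / x) = 2 * besselK 1 (2 * b) := by
  set g : ℝ → ℝ := fun x => exp (-(b * x) - b / x)
  have hg : ∀ t, g (exp t) = exp (-(2 * b) * cosh t) := fun t => by
    simp only [g, cosh_eq, exp_neg]; ring_nf
  have hderiv : ∀ t ∈ univ, HasDerivWithinAt exp (exp t) univ t :=
    fun t _ => (hasDerivAt_exp t).hasDerivWithinAt
  have hinj : InjOn exp univ := exp_injective.injOn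
  have himage : exp '' univ = Ioi 0 := by rw [image_univ, range_exp]
  have hint : Integrable fun t => exp t * exp (-(2 * b) * cosh t) := by
    have := (integrableOn_image_iff_integrableOn_abs_deriv_smul MeasurableSet.univ hderiv hinj g).1
      (himage ▸ integrableOn_exp_neg_mul_sub_div hb hb.le)
    simpa [abs_of_pos (exp_pos _), hg] using this
  calc ∫ x in Ioi 0, g x = ∫ t, exp t * exp (-(2 * b) * cosh t) := by
        rw [← himage, integral_image_eq_integral_abs_deriv_smul MeasurableSet.univ hderiv hinj]
        simp [abs_of_pos (exp_pos _), hg]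
    _ = ∫ t, cosh t * exp (-(2 * b) * cosh t) :=
        integral_exp_mul_eq_integral_cosh_mul (fun t => by rw [cosh_neg]) hint
    _ = ∫ t, (fun s => exp (-(2 * b) * cosh s) * cosh (1 * s)) |t| := by
        congr with t; simp [cosh_abs, mul_comm]
    _ = 2 * besselK 1 (2 * b) :=
        integral_comp_abs (f := fun s => exp (-(2 * b) * cosh s) * cosh (1 * s))

lemma integral_exp_neg_sub_div {c : ℝ} (hc : 0 < c) :
    ∫ x in Ioi 0, exp (-x - c / x) = 2 * √c * besselK 1 (2 * √c) := by
  have hb : 0 < √c := sqrt_pos.2 hc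
  have hscale := integral_comp_mul_left_Ioi' (fun x => exp (-x - c / x)) 0 hb
  have hdiv : ∀ x, c / (√c * x) = √c / x := fun x => by rw [← div_div, div_sqrt]
  simp only [mul_zero, hdiv, smul_eq_mul, integral_exp_neg_mul_sub_div_self hb] at hscale
  rw [← hscale]
  ring

lemma ae_pos_gammaMeasure (a r : ℝ) : ∀ᵐ x ∂gammaMeasure a r, 0 < x := by
  have hIic : {x : ℝ | ¬ 0 < x} = Iic 0 := by ext; simp
  rw [ae_iff, hIic, gammaMeasure, withDensity_apply _ measurableSet_Iic,
    setLIntegral_congr Iio_ae_eq_Iic.symm]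
  exact lintegral_gammaPDF_of_nonpos le_rfl

lemma measurable_gammaPDF (a r : ℝ) : Measurable (gammaPDF a r) :=
  (measurable_gammaPDFReal a r).ennreal_ofReal

lemma expMeasure_Ici {r t : ℝ} (hr : 0 < r) (ht : 0 ≤ t) :
    expMeasure r (Ici t) = ENNReal.ofReal (exp (-(r * t))) := by
  have hpdf : ∫⁻ x in Ioi t, gammaPDF 1 r x = ∫⁻ x in Ioi t, ENNReal.ofReal (r * exp (-r * x)) :=
    setLIntegral_congr_fun measurableSet_Ioi fun x hx => by
      show exponentialPDF r x = _
      rw [exponentialPDF_of_nonneg (ht.trans hx.le), neg_mul]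
  rw [expMeasure, gammaMeasure, withDensity_apply _ measurableSet_Ici,
    setLIntegral_congr Ioi_ae_eq_Ici.symm, hpdf, ← ofReal_integral_eq_lintegral_ofReal
      ((exp_neg_integrableOn_Ioi t hr).const_mul r) (ae_of_all _ fun x => by positivity),
    integral_const_mul, integral_exp_mul_Ioi (by linarith)]
  congr 1
  field_simp

lemma lintegral_exp_neg_mul_gammaMeasure {a r s : ℝ} (ha : 0 < a) (hr : 0 < r) (hs : 0 ≤ s) :
    ∫⁻ z, ENNReal.ofReal (exp (-(s * z))) ∂gammaMeasure a r
      = ENNReal.ofReal ((r / (r + s)) ^ a) := by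
  have hrs : 0 < r + s := by linarith
  have htilt : ∀ z, gammaPDF a r z * ENNReal.ofReal (exp (-(s * z)))
      = ENNReal.ofReal ((r / (r + s)) ^ a) * gammaPDF a (r + s) z := fun z => by
    rcases lt_or_ge z 0 with hz | hz
    · rw [gammaPDF_of_neg hz, gammaPDF_of_neg hz, zero_mul, mul_zero]
    · rw [gammaPDF_of_nonneg hz, gammaPDF_of_nonneg hz, ← ENNReal.ofReal_mul (by positivity),
        ← ENNReal.ofReal_mul (by positivity), div_rpow hr.le hrs.le,
        show exp (-((r + s) * z)) = exp (-(r * z)) * exp (-(s * z)) by rw [← exp_add]; ring_nf]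
      congr 1
      field_simp
  rw [gammaMeasure, lintegral_withDensity_eq_lintegral_mul _ (measurable_gammaPDF a r)
    (by fun_prop)]
  simp only [Pi.mul_apply, htilt]
  rw [lintegral_const_mul _ (measurable_gammaPDF a (r + s)), lintegral_gammaPDF_eq_one ha hrs,
    mul_one]

lemma lintegral_exp_neg_div_expMeasure {c : ℝ} (hc : 0 < c) :
    ∫⁻ x, ENNReal.ofReal (exp (-(c / x))) ∂expMeasure 1
      = ENNReal.ofReal (2 * √c * besselK 1 (2 * √c)) := by
  have hpos : ∀ᵐ x ∂expMeasure 1, x ∈ Ioi 0 := ae_pos_gammaMeasure 1 1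
  have hint : IntegrableOn (fun x => exp (-x - c / x)) (Ioi 0) := by
    simpa only [one_mul] using integrableOn_exp_neg_mul_sub_div one_pos hc.le
  rw [← Measure.restrict_eq_self_of_ae_mem hpos, expMeasure, gammaMeasure,
    restrict_withDensity measurableSet_Ioi,
    lintegral_withDensity_eq_lintegral_mul _ (measurable_gammaPDF 1 1) (by fun_prop),
    ← integral_exp_neg_sub_div hc, ofReal_integral_eq_lintegral_ofReal hint
      (ae_of_all _ fun _ => exp_nonneg _)]
  refine setLIntegral_congr_fun measurableSet_Ioi fun x (hx : 0 < x) => ?_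
  rw [Pi.mul_apply, gammaPDF_of_nonneg hx.le, ← ENNReal.ofReal_mul (by positivity)]
  simp [sub_eq_add_neg, exp_add]

lemma prod_expMeasure_setOf_add_le {α β : Type*} [MeasurableSpace α] [MeasurableSpace β]
    {ν₁ : Measure α} {ν₂ : Measure β} [SFinite ν₁] [SFinite ν₂] {f : α → ℝ} {g : β → ℝ}
    (hf : Measurable f) (hg : Measurable g) (hf0 : ∀ᵐ x ∂ν₁, 0 ≤ f x) (hg0 : ∀ᵐ z ∂ν₂, 0 ≤ g z) :
    ν₁.prod ((expMeasure 1).prod ν₂) {q | f q.1 + g q.2.2 ≤ q.2.1}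
      = (∫⁻ x, ENNReal.ofReal (exp (-f x)) ∂ν₁) * ∫⁻ z, ENNReal.ofReal (exp (-g z)) ∂ν₂ := by
  have := isProbabilityMeasure_expMeasure one_pos
  have hslice : ∀ x, 0 ≤ f x → (expMeasure 1).prod ν₂ {p | f x + g p.2 ≤ p.1}
      = ∫⁻ z, ENNReal.ofReal (exp (-f x)) * ENNReal.ofReal (exp (-g z)) ∂ν₂ := fun x hx => by
    rw [Measure.prod_apply_symm (measurableSet_le (by fun_prop) (by fun_prop))]
    refine lintegral_congr_ae (hg0.mono fun z hz => ?_)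
    show expMeasure 1 (Ici (f x + g z))
      = ENNReal.ofReal (exp (-f x)) * ENNReal.ofReal (exp (-g z))
    rw [expMeasure_Ici one_pos (add_nonneg hx hz), one_mul, neg_add, exp_add,
      ENNReal.ofReal_mul (exp_nonneg _)]
  rw [Measure.prod_apply (measurableSet_le (by fun_prop) (by fun_prop))]
  refine (lintegral_congr_ae (hf0.mono fun x hx => hslice x hx)).trans ?_
  simp_rw [lintegral_const_mul _ (by fun_prop : Measurable fun z => ENNReal.ofReal (exp (-g z)))]
  exact lintegral_mul_const _ (by fun_prop)

lemma ProbabilityTheory.iIndepFun.measure_iInter_preimage_eq_pow {Ω ι β : Type*}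
    [MeasurableSpace Ω] [MeasurableSpace β] [Fintype ι] {μ : Measure Ω} {ν : Measure β} [NeZero ν]
    {T : ι → Ω → β} (hT : iIndepFun T μ) (hlaw : ∀ i, μ.map (T i) = ν) {S : Set β}
    (hS : MeasurableSet S) :
    μ (⋂ i, T i ⁻¹' S) = ν S ^ Fintype.card ι := by
  have hmarginal : ∀ i, μ (T i ⁻¹' S) = ν S := fun i => by
    have : AEMeasurable (T i) μ := aemeasurable_of_map_neZero (by rw [hlaw i]; infer_instance)
    rw [← hlaw i, Measure.map_apply_of_aemeasurable this hS]
  rw [hT.meas_iInter fun i => ⟨S, hS, rfl⟩]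
  simp [hmarginal]

noncomputable def branchSINR (α₁ α₂ ρ : ℝ) (q : ℝ × ℝ × ℝ) : ℝ :=
  q.1 * q.2.1 * α₁ ^ 2 / (q.1 * q.2.1 * α₂ ^ 2 + q.1 * q.2.2 + 1 / ρ)

lemma measurable_branchSINR (α₁ α₂ ρ : ℝ) : Measurable (branchSINR α₁ α₂ ρ) := by
  unfold branchSINR
  fun_prop

lemma le_branchSINR_iff {α₁ α₂ ρ ε τ x y z : ℝ} (hρ : 0 < ρ) (hτ : τ = α₁ ^ 2 - ε * α₂ ^ 2)
    (hτpos : 0 < τ) (hx : 0 < x) (hy : 0 ≤ y) (hz : 0 ≤ z) :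
    ε ≤ branchSINR α₁ α₂ ρ (x, y, z) ↔ ε / (ρ * τ) / x + ε / τ * z ≤ y := by
  have hD : 0 < x * y * α₂ ^ 2 + x * z + 1 / ρ := by positivity
  have key : x * y * α₁ ^ 2 - ε * (x * y * α₂ ^ 2 + x * z + 1 / ρ)
      = x * τ * (y - (ε / (ρ * τ) / x + ε / τ * z)) := by
    field_simp
    rw [hτ]
    ring
  rw [branchSINR, le_div_iff₀ hD, ← sub_nonneg, key, mul_nonneg_iff_of_pos_left (mul_pos hx hτpos),
    sub_nonneg]

lemma measureReal_branchSINR_lt {α₁ α₂ ρ ε τ a : ℝ} (hρ : 0 < ρ) (hε : 0 < ε)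
    (hτ : τ = α₁ ^ 2 - ε * α₂ ^ 2) (hτpos : 0 < τ) (ha : 0 < a) :
    ((expMeasure 1).prod ((expMeasure 1).prod (gammaMeasure a 1))).real
        {q | branchSINR α₁ α₂ ρ q < ε}
      = 1 - 2 * √(ε / (ρ * τ)) * besselK 1 (2 * √(ε / (ρ * τ))) / (1 + ε / τ) ^ a := by
  set c := ε / (ρ * τ)
  set s := ε / τ
  have hc : 0 < c := by positivity
  have hs : 0 < s := by positivity
  have := isProbabilityMeasure_expMeasure one_pos
  have := isProbabilityMeasure_gammaMeasure ha one_pos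
  set m := (expMeasure 1).prod ((expMeasure 1).prod (gammaMeasure a 1))
  have hmeas : MeasurableSet {q | ε ≤ branchSINR α₁ α₂ ρ q} :=
    measurableSet_le measurable_const (measurable_branchSINR α₁ α₂ ρ)
  have hexp_pos : ∀ᵐ x ∂expMeasure 1, 0 < x := ae_pos_gammaMeasure 1 1
  have hpos : ∀ᵐ q ∂m, 0 < q.1 ∧ 0 < q.2.1 ∧ 0 < q.2.2 := by
    filter_upwards [Measure.quasiMeasurePreserving_fst.ae hexp_pos,
      Measure.quasiMeasurePreserving_snd.ae (Measure.quasiMeasurePreserving_fst.ae hexp_pos),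
      Measure.quasiMeasurePreserving_snd.ae
        (Measure.quasiMeasurePreserving_snd.ae (ae_pos_gammaMeasure a 1))] with q hx hy hz
    exact ⟨hx, hy, hz⟩
  have hreach : {q | ε ≤ branchSINR α₁ α₂ ρ q} =ᵐ[m] {q | c / q.1 + s * q.2.2 ≤ q.2.1} := by
    filter_upwards [hpos] with ⟨x, y, z⟩ ⟨hx, hy, hz⟩
    exact propext (le_branchSINR_iff hρ hτ hτpos hx hy.le hz.le)
  have hreach_prob : m {q | ε ≤ branchSINR α₁ α₂ ρ q}
      = ENNReal.ofReal (2 * √c * besselK 1 (2 * √c)) * ENNReal.ofReal ((1 / (1 + s)) ^ a) := by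
    rw [measure_congr hreach, prod_expMeasure_setOf_add_le (by fun_prop) (by fun_prop)
      (hexp_pos.mono fun x hx => by positivity)
      (ae_pos_gammaMeasure a 1 |>.mono fun z hz => by positivity),
      lintegral_exp_neg_div_expMeasure hc, lintegral_exp_neg_mul_gammaMeasure ha one_pos hs.le]
  have hcompl : {q | branchSINR α₁ α₂ ρ q < ε} = {q | ε ≤ branchSINR α₁ α₂ ρ q}ᶜ := by
    ext; simp
  rw [hcompl, measureReal_compl hmeas, probReal_univ, measureReal_def, hreach_prob,
    ENNReal.toReal_mul, ENNReal.toReal_ofReal (by positivity [besselK_nonneg 1 (2 * √c)]),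
    ENNReal.toReal_ofReal (by positivity), div_rpow zero_le_one (by positivity), one_rpow]
  ring

theorem stmt_16_general (K N : ℕ) (hK : 2 ≤ K)
    (α₁ α₂ ρ R ε τ : ℝ) (hρ : 0 < ρ) (hR : 0 < R)
    (hε : ε = 2 ^ R - 1) (hτ : τ = α₁ ^ 2 - ε * α₂ ^ 2) (hτpos : 0 < τ)
    {Ω : Type*} [MeasureSpace Ω] [IsProbabilityMeasure (ℙ : Measure Ω)]
    (X Y Z : Fin N → Ω → ℝ)
    (hiid : iIndepFun (fun p ω => (X p ω, Y p ω, Z p ω)) ℙ)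
    (hlaw : ∀ p, Measure.map (fun ω => (X p ω, Y p ω, Z p ω)) ℙ =
      (expMeasure 1).prod ((expMeasure 1).prod (gammaMeasure (K - 1) 1))) :
    (ℙ {ω | ∀ p : Fin N,
        X p ω * Y p ω * α₁ ^ 2 / (X p ω * Y p ω * α₂ ^ 2 + X p ω * Z p ω + 1 / ρ) < ε}).toReal =
      (1 - 2 * Real.sqrt (ε / (ρ * τ)) * besselK 1 (2 * Real.sqrt (ε / (ρ * τ))) /
        (1 + ε / τ) ^ ((K : ℝ) - 1)) ^ N := by
  have hε0 : 0 < ε := by linarith [one_lt_rpow (by norm_num : (1 : ℝ) < 2) hR]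
  have ha : 0 < (K : ℝ) - 1 := by
    have : (2 : ℝ) ≤ K := mod_cast hK
    linarith
  have := isProbabilityMeasure_expMeasure one_pos
  have := isProbabilityMeasure_gammaMeasure ha one_pos
  have houtage : {ω | ∀ p : Fin N,
      X p ω * Y p ω * α₁ ^ 2 / (X p ω * Y p ω * α₂ ^ 2 + X p ω * Z p ω + 1 / ρ) < ε}
      = ⋂ p, (fun ω => (X p ω, Y p ω, Z p ω)) ⁻¹' {q | branchSINR α₁ α₂ ρ q < ε} := by
    ext; simp [branchSINR]
  rw [houtage, hiid.measure_iInter_preimage_eq_pow hlaw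
      (measurableSet_lt (measurable_branchSINR α₁ α₂ ρ) measurable_const),
    ENNReal.toReal_pow, Fintype.card_fin, ← measureReal_def,
    measureReal_branchSINR_lt hρ hε0 hτ hτpos ha]

theorem stmt_16 (K N : ℕ) (hK : 2 ≤ K) (hN : 1 ≤ N)
    (α₁ α₂ ρ R ε τ : ℝ) (hα₁ : 0 ≤ α₁) (hα₂ : 0 ≤ α₂) (hρ : 0 < ρ) (hR : 0 < R)
    (hε : ε = 2 ^ R - 1) (hτ : τ = α₁ ^ 2 - ε * α₂ ^ 2) (hτpos : 0 < τ)
    {Ω : Type*} [MeasureSpace Ω] [IsProbabilityMeasure (ℙ : Measure Ω)]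
    (X Y Z : Fin N → Ω → ℝ)
    (hiid : iIndepFun (fun p ω => (X p ω, Y p ω, Z p ω)) ℙ)
    (hlaw : ∀ p, Measure.map (fun ω => (X p ω, Y p ω, Z p ω)) ℙ =
      (expMeasure 1).prod ((expMeasure 1).prod (gammaMeasure (K - 1) 1))) :
    (ℙ {ω | ∀ p : Fin N,
        X p ω * Y p ω * α₁ ^ 2 / (X p ω * Y p ω * α₂ ^ 2 + X p ω * Z p ω + 1 / ρ) < ε}).toReal =
      (1 - 2 * Real.sqrt (ε / (ρ * τ)) * besselK 1 (2 * Real.sqrt (ε / (ρ * τ))) /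
        (1 + ε / τ) ^ ((K : ℝ) - 1)) ^ N :=
  stmt_16_general K N hK α₁ α₂ ρ R ε τ hρ hR hε hτ hτpos X Y Z hiid hlaw
end

section
/- Let K ≥ 2 and N ≥ 1 be integers, ε > 0, τ > 0. Then lim_{ρ→∞} ( 1 − 2·√(ε/(ρτ))·K₁(2·√(ε/(ρτ))) / (1 + ε/τ)^{K−1} )^N = ( 1 − 1/(1 + ε/τ)^{K−1} )^N, and this limit is strictly positive. -/
/-! The substitution `u = x sinh t` turns `x K₁(x)` into `∫_{u>0} exp(-√(x² + u²)) du`, which is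
squeezed between `exp (-x)` and `∫_{u>0} exp(-u) du = 1`; hence `x K₁(x) → 1` as `x → 0⁺`. As
`ρ → ∞` the argument `2√(ε/(ρτ))` tends to `0⁺`, so each factor of the outage probability tends
to `1 - (1 + ε/τ)^{-(K-1)}`, which is positive because `K - 1 > 0`. -/

open Filter

open MeasureTheory Real Set Topology

lemma le_sqrt_sq_add_sq (x : ℝ) {u : ℝ} (hu : 0 ≤ u) : u ≤ √(x ^ 2 + u ^ 2) :=
  (Real.le_sqrt hu (by positivity)).2 (by nlinarith)

lemma sqrt_sq_add_sq_le_add {x u : ℝ} (hx : 0 ≤ x) (hu : 0 ≤ u) : √(x ^ 2 + u ^ 2) ≤ x + u :=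
  (Real.sqrt_le_left (by positivity)).2 (by nlinarith)

lemma mul_besselK_one_eq_integral {x : ℝ} (hx : 0 < x) :
    x * besselK 1 x = ∫ u in Ioi (0 : ℝ), exp (-√(x ^ 2 + u ^ 2)) := by
  have himage : (fun t => x * sinh t) '' Ioi 0 = Ioi 0 := by
    ext u
    constructor
    · rintro ⟨t, ht, rfl⟩
      exact mul_pos hx (sinh_pos_iff.mpr ht)
    · intro hu
      refine ⟨arsinh (u / x), arsinh_pos_iff.mpr (div_pos hu hx), ?_⟩
      simp only [sinh_arsinh]
      field_simp
  have hderiv : ∀ t ∈ Ioi (0 : ℝ),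
      HasDerivWithinAt (fun t => x * sinh t) (x * cosh t) (Ioi 0) t :=
    fun t _ => ((hasDerivAt_sinh t).const_mul x).hasDerivWithinAt
  have hinj : InjOn (fun t => x * sinh t) (Ioi 0) :=
    fun a _ b _ h => sinh_injective (mul_left_cancel₀ hx.ne' h)
  have hsubst := integral_image_eq_integral_abs_deriv_smul measurableSet_Ioi hderiv hinj
    (fun u => exp (-√(x ^ 2 + u ^ 2)))
  rw [himage] at hsubst
  rw [hsubst, besselK, ← integral_const_mul]
  refine setIntegral_congr_fun measurableSet_Ioi fun t _ => ?_
  have hxcosh : 0 < x * cosh t := mul_pos hx (cosh_pos t)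
  have hsqrt : √(x ^ 2 + (x * sinh t) ^ 2) = x * cosh t := by
    rw [← Real.sqrt_sq hxcosh.le]
    congr 1
    linear_combination x ^ 2 * (cosh_sq t).symm
  simp only [smul_eq_mul, hsqrt, abs_of_pos hxcosh, neg_mul, one_mul]
  ring

lemma integrableOn_exp_neg_sqrt_sq_add_sq (x : ℝ) :
    IntegrableOn (fun u => exp (-√(x ^ 2 + u ^ 2))) (Ioi 0) := by
  refine (integrableOn_exp_neg_Ioi 0).mono' (by fun_prop) ?_
  filter_upwards [ae_restrict_mem measurableSet_Ioi] with u hu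
  rw [norm_of_nonneg (exp_pos _).le, exp_le_exp, neg_le_neg_iff]
  exact le_sqrt_sq_add_sq x (le_of_lt hu)

lemma integral_exp_neg_sqrt_sq_add_sq_le_one (x : ℝ) :
    ∫ u in Ioi (0 : ℝ), exp (-√(x ^ 2 + u ^ 2)) ≤ 1 := by
  rw [← integral_exp_neg_Ioi_zero]
  refine setIntegral_mono_on (integrableOn_exp_neg_sqrt_sq_add_sq x) (integrableOn_exp_neg_Ioi 0)
    measurableSet_Ioi fun u hu => ?_
  rw [exp_le_exp, neg_le_neg_iff]
  exact le_sqrt_sq_add_sq x (le_of_lt hu)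

lemma exp_neg_le_integral_exp_neg_sqrt_sq_add_sq {x : ℝ} (hx : 0 ≤ x) :
    exp (-x) ≤ ∫ u in Ioi (0 : ℝ), exp (-√(x ^ 2 + u ^ 2)) := by
  have hexp : exp (-x) = ∫ u in Ioi (0 : ℝ), exp (-x) * exp (-u) := by
    rw [integral_const_mul, integral_exp_neg_Ioi_zero, mul_one]
  rw [hexp]
  refine setIntegral_mono_on ((integrableOn_exp_neg_Ioi 0).const_mul _)
    (integrableOn_exp_neg_sqrt_sq_add_sq x) measurableSet_Ioi fun u hu => ?_
  rw [← exp_add, exp_le_exp]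
  linarith [sqrt_sq_add_sq_le_add hx (le_of_lt hu)]

lemma tendsto_mul_besselK_one_nhdsGT_zero :
    Tendsto (fun x => x * besselK 1 x) (𝓝[>] 0) (𝓝 1) := by
  have hlower : Tendsto (fun x : ℝ => exp (-x)) (𝓝[>] 0) (𝓝 1) :=
    ((continuous_exp.comp continuous_neg).tendsto' 0 1 (by simp)).mono_left
      nhdsWithin_le_nhds
  refine tendsto_of_tendsto_of_tendsto_of_le_of_le' hlower tendsto_const_nhds ?_ ?_
  · filter_upwards [self_mem_nhdsWithin] with x hx
    rw [mul_besselK_one_eq_integral hx]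
    exact exp_neg_le_integral_exp_neg_sqrt_sq_add_sq (le_of_lt hx)
  · filter_upwards [self_mem_nhdsWithin] with x hx
    rw [mul_besselK_one_eq_integral hx]
    exact integral_exp_neg_sqrt_sq_add_sq_le_one x

lemma tendsto_two_mul_sqrt_div_mul_atTop_nhdsGT_zero {ε τ : ℝ} (hε : 0 < ε) (hτ : 0 < τ) :
    Tendsto (fun ρ : ℝ => 2 * √(ε / (ρ * τ))) atTop (𝓝[>] 0) := by
  refine tendsto_nhdsWithin_iff.2 ⟨?_, ?_⟩
  · have hquot : Tendsto (fun ρ : ℝ => ε / (ρ * τ)) atTop (𝓝 0) :=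
      tendsto_const_nhds.div_atTop (tendsto_id.atTop_mul_const hτ)
    simpa using ((continuous_sqrt.tendsto 0).comp hquot).const_mul 2
  · filter_upwards [eventually_gt_atTop 0] with ρ hρ
    exact mul_pos two_pos (sqrt_pos.2 (div_pos hε (mul_pos hρ hτ)))

theorem stmt_18_general (K N : ℕ) (hK : 2 ≤ K) (ε τ : ℝ) (hε : 0 < ε) (hτ : 0 < τ) :
    Tendsto
      (fun ρ : ℝ =>
        (1 - 2 * Real.sqrt (ε / (ρ * τ)) * besselK 1 (2 * Real.sqrt (ε / (ρ * τ))) /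
          (1 + ε / τ) ^ ((K : ℝ) - 1)) ^ N)
      atTop (nhds ((1 - 1 / (1 + ε / τ) ^ ((K : ℝ) - 1)) ^ N)) ∧
    0 < (1 - 1 / (1 + ε / τ) ^ ((K : ℝ) - 1)) ^ N := by
  have hK' : (2 : ℝ) ≤ K := by exact_mod_cast hK
  have hpow : 1 < (1 + ε / τ) ^ ((K : ℝ) - 1) :=
    one_lt_rpow (by linarith [div_pos hε hτ]) (by linarith)
  have hxK : Tendsto (fun ρ : ℝ => 2 * √(ε / (ρ * τ)) * besselK 1 (2 * √(ε / (ρ * τ))))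
      atTop (𝓝 1) :=
    tendsto_mul_besselK_one_nhdsGT_zero.comp
      (tendsto_two_mul_sqrt_div_mul_atTop_nhdsGT_zero hε hτ)
  refine ⟨(tendsto_const_nhds.sub (hxK.div_const _)).pow N, pow_pos ?_ N⟩
  rw [sub_pos, div_lt_one (by linarith)]
  exact hpow

theorem stmt_18 (K N : ℕ) (hK : 2 ≤ K) (hN : 1 ≤ N) (ε τ : ℝ) (hε : 0 < ε) (hτ : 0 < τ) :
    Tendsto
      (fun ρ : ℝ =>
        (1 - 2 * Real.sqrt (ε / (ρ * τ)) * besselK 1 (2 * Real.sqrt (ε / (ρ * τ))) /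
          (1 + ε / τ) ^ ((K : ℝ) - 1)) ^ N)
      atTop (nhds ((1 - 1 / (1 + ε / τ) ^ ((K : ℝ) - 1)) ^ N)) ∧
    0 < (1 - 1 / (1 + ε / τ) ^ ((K : ℝ) - 1)) ^ N :=
  stmt_18_general K N hK ε τ hε hτ
end
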